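/- For k ≥ 4, the maximum over all pairs (B, x) with B ⊆ Z_k and x ∈ Z_k, (B, x) ≠ (∅, 0), of the minimum length of a valid path from 0 to x covering B in the marked cycle on Z_k, equals k + ⌊k/2⌋ − 2. -/

import Mathlib

/-!
Lift walks to `ℤ`. An integer walk from `0` with maximum `H`, minimum `L` and end `e` covers only
integers in `[L - 1, H]`, where `L - 1` needs a `d`-move and `H` a `b`-move; so covering every
residue mod `k` forces `H - L + #{b, d used} ≥ k`. Besides, the walk visits both extremes before
it ends, which costs at least `(H - L) + min (H + (e - L)) (-L + (H - e))` moves `a` and `c`. For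
`e ≡ ⌊k/2⌋ (mod k)` the two bounds add up to `k + ⌊k/2⌋ - 2`. Conversely, every target `v` is
reached within that length by a walk sweeping `k` consecutive integers: `b aᵏ⁻² d cᵛ⁻²` for
`2 ≤ v ≤ k/2`, and for larger `v` the reversal of such a walk, since reversing a walk and swapping
`a` with `c` preserves the covered set.
-/

/-- The four move types in the marked cycle. -/
inductive Move : Type
  | a | b | c | d
deriving DecidableEq

/-- Where a move from node `x` in `ZMod k` leads. -/
def Move.step {k : ℕ} (x : ZMod k) : Move → ZMod k
  | .a => x - 1
  | .b => x
  | .c => x + 1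
  | .d => x

/-- The node covered by a move performed from node `x`. -/
def Move.covers {k : ℕ} (x : ZMod k) : Move → ZMod k
  | .a => x - 1
  | .b => x
  | .c => x
  | .d => x - 1

/-- The node reached after performing a sequence of moves starting at `s`. -/
def endAt {k : ℕ} (s : ZMod k) : List Move → ZMod k
  | [] => s
  | m :: ms => endAt (Move.step s m) ms

/-- The set of nodes covered by a sequence of moves starting at `s`. -/
def coveredSet {k : ℕ} (s : ZMod k) : List Move → Set (ZMod k)
  | [] => ∅
  | m :: ms => insert (Move.covers s m) (coveredSet (Move.step s m) ms)

/-- A valid path in the marked cycle on `ZMod k` with marked set `B`, start `s`,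
end `t`: a nonempty sequence of moves from `s` to `t` covering every node of `B`. -/
def ValidPath {k : ℕ} (B : Set (ZMod k)) (s t : ZMod k) (p : List Move) : Prop :=
  p ≠ [] ∧ endAt s p = t ∧ B ⊆ coveredSet s p

/-- A shortest valid path: valid and of minimum length among all valid paths. -/
def ShortestPath {k : ℕ} (B : Set (ZMod k)) (s t : ZMod k) (p : List Move) : Prop :=
  ValidPath B s t p ∧ ∀ q : List Move, ValidPath B s t q → p.length ≤ q.length

namespace Move

def stepInt (x : ℤ) : Move → ℤ
  | .a => x - 1
  | .b => x
  | .c => x + 1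
  | .d => x

def coversInt (x : ℤ) : Move → ℤ
  | .a => x - 1
  | .b => x
  | .c => x
  | .d => x - 1

def reverse : Move → Move
  | .a => .c
  | .b => .b
  | .c => .a
  | .d => .d

@[simp]
lemma stepInt_reverse_stepInt (x : ℤ) (m : Move) : stepInt (stepInt x m) m.reverse = x := by
  cases m <;> simp [stepInt, reverse]

@[simp]
lemma coversInt_reverse_stepInt (x : ℤ) (m : Move) :
    coversInt (stepInt x m) m.reverse = coversInt x m := by
  cases m <;> simp [stepInt, coversInt, reverse]

lemma intCast_stepInt {k : ℕ} (x : ℤ) (m : Move) :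
    ((stepInt x m : ℤ) : ZMod k) = step (x : ZMod k) m := by
  cases m <;> simp [stepInt, step]

lemma intCast_coversInt {k : ℕ} (x : ℤ) (m : Move) :
    ((coversInt x m : ℤ) : ZMod k) = covers (x : ZMod k) m := by
  cases m <;> simp [coversInt, covers]

end Move

open Move Set

def endAtInt (s : ℤ) : List Move → ℤ
  | [] => s
  | m :: ms => endAtInt (stepInt s m) ms

def coveredSetInt (s : ℤ) : List Move → Set ℤ
  | [] => ∅
  | m :: ms => insert (coversInt s m) (coveredSetInt (stepInt s m) ms)

def maxAt (s : ℤ) : List Move → ℤ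
  | [] => s
  | m :: ms => max s (maxAt (stepInt s m) ms)

def minAt (s : ℤ) : List Move → ℤ
  | [] => s
  | m :: ms => min s (minAt (stepInt s m) ms)

def reverseWalk (p : List Move) : List Move :=
  (p.map Move.reverse).reverse

section IntWalk

variable (s : ℤ) (p q : List Move)

lemma intCast_endAtInt {k : ℕ} : ((endAtInt s p : ℤ) : ZMod k) = endAt (s : ZMod k) p := by
  induction p generalizing s with
  | nil => rfl
  | cons m ms ih => rw [endAtInt, endAt, ← intCast_stepInt, ih]

lemma coveredSet_intCast {k : ℕ} :
    coveredSet (s : ZMod k) p = ((↑) : ℤ → ZMod k) '' coveredSetInt s p := by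
  induction p generalizing s with
  | nil => simp [coveredSet, coveredSetInt]
  | cons m ms ih =>
    rw [coveredSet, coveredSetInt, image_insert_eq, ← intCast_stepInt, ih, intCast_coversInt]

lemma endAtInt_append : endAtInt s (p ++ q) = endAtInt (endAtInt s p) q := by
  induction p generalizing s with
  | nil => rfl
  | cons m ms ih => exact ih _

lemma coveredSetInt_append :
    coveredSetInt s (p ++ q) = coveredSetInt s p ∪ coveredSetInt (endAtInt s p) q := by
  induction p generalizing s with
  | nil => simp [coveredSetInt, endAtInt]
  | cons m ms ih => rw [List.cons_append, coveredSetInt, coveredSetInt, ih, insert_union]; rfl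

lemma reverseWalk_cons (m : Move) : reverseWalk (m :: p) = reverseWalk p ++ [m.reverse] := by
  simp [reverseWalk]

lemma endAtInt_reverseWalk : endAtInt (endAtInt s p) (reverseWalk p) = s := by
  induction p generalizing s with
  | nil => rfl
  | cons m ms ih =>
    simp [reverseWalk_cons, endAtInt_append, endAtInt, ih]

lemma coveredSetInt_reverseWalk :
    coveredSetInt (endAtInt s p) (reverseWalk p) = coveredSetInt s p := by
  induction p generalizing s with
  | nil => rfl
  | cons m ms ih =>
    rw [reverseWalk_cons, coveredSetInt_append, endAtInt, ih, endAtInt_reverseWalk]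
    simp [coveredSetInt]

lemma endAtInt_replicate_c (n : ℕ) : endAtInt s (List.replicate n .c) = s + n := by
  induction n generalizing s with
  | zero => simp [endAtInt]
  | succ n ih => rw [List.replicate_succ, endAtInt, ih, stepInt]; push_cast; ring

lemma endAtInt_replicate_a (n : ℕ) : endAtInt s (List.replicate n .a) = s - n := by
  induction n generalizing s with
  | zero => simp [endAtInt]
  | succ n ih => rw [List.replicate_succ, endAtInt, ih, stepInt]; push_cast; ring

lemma coveredSetInt_replicate_c (n : ℕ) :
    coveredSetInt s (List.replicate n .c) = Ico s (s + n) := by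
  induction n generalizing s with
  | zero => simp [coveredSetInt]
  | succ n ih =>
    rw [List.replicate_succ, coveredSetInt, ih, stepInt, coversInt]
    ext z
    simp only [mem_insert_iff, mem_Ico]
    push_cast
    omega

lemma coveredSetInt_replicate_a (n : ℕ) :
    coveredSetInt s (List.replicate n .a) = Ico (s - n) s := by
  induction n generalizing s with
  | zero => simp [coveredSetInt]
  | succ n ih =>
    rw [List.replicate_succ, coveredSetInt, ih, stepInt, coversInt]
    ext z
    simp only [mem_insert_iff, mem_Ico]
    push_cast
    omega

end IntWalk

section Extremes

variable (s : ℤ) (p : List Move)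

lemma minAt_le_self : minAt s p ≤ s := by
  cases p <;> simp [minAt]

lemma self_le_maxAt : s ≤ maxAt s p := by
  cases p <;> simp [maxAt]

lemma endAtInt_mem_Icc : endAtInt s p ∈ Icc (minAt s p) (maxAt s p) := by
  induction p generalizing s with
  | nil => simp [endAtInt, minAt, maxAt]
  | cons m ms ih =>
    have := ih (stepInt s m)
    simp only [mem_Icc, endAtInt, minAt, maxAt] at *
    omega

lemma length_eq_count : p.length = p.count .a + p.count .b + p.count .c + p.count .d := by
  induction p with
  | nil => simp
  | cons m ms ih => cases m <;> simp [ih] <;> omega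

/-- The node below the minimum is covered only by a `d`-move, the maximum only by a `b`-move. -/
lemma coveredSetInt_subset_Icc : coveredSetInt s p ⊆
    Icc (minAt s p - min 1 (p.count .d)) (maxAt s p - 1 + min 1 (p.count .b)) := by
  induction p generalizing s with
  | nil => simp [coveredSetInt]
  | cons m ms ih =>
    have hmin := minAt_le_self (stepInt s m) ms
    have hmax := self_le_maxAt (stepInt s m) ms
    rintro z (rfl | hz)
    · cases m <;> simp [coversInt, stepInt, minAt, maxAt] at * <;> omega
    · have := ih _ hz
      cases m <;> simp [stepInt, minAt, maxAt] at * <;> omega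

/-- The walk visits its maximum and its minimum, in one order or the other, and then ends. -/
lemma travel_le_count : maxAt s p - minAt s p + min (maxAt s p - s + (endAtInt s p - minAt s p))
    (s - minAt s p + (maxAt s p - endAtInt s p)) ≤ p.count .a + p.count .c := by
  induction p generalizing s with
  | nil => simp [maxAt, minAt, endAtInt]
  | cons m ms ih =>
    have := ih (stepInt s m)
    have hmin := minAt_le_self (stepInt s m) ms
    have hmax := self_le_maxAt (stepInt s m) ms
    have hend := endAtInt_mem_Icc (stepInt s m) ms
    cases m <;> simp [stepInt, maxAt, minAt, endAtInt] at * <;> omega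

end Extremes

section Windows

variable {k : ℕ} [NeZero k]

lemma intCast_image_Ico (A : ℤ) : ((↑) : ℤ → ZMod k) '' Ico A (A + k) = univ := by
  refine eq_univ_of_forall fun r => ⟨A + (r - A).val, ?_, ?_⟩
  · have := (r - A).val_lt
    simp only [mem_Ico]
    omega
  · push_cast
    rw [ZMod.natCast_zmod_val]
    ring

lemma le_of_surjOn_Icc {A B : ℤ} (h : SurjOn ((↑) : ℤ → ZMod k) (Icc A B) univ) :
    (k : ℤ) ≤ B + 1 - A := by
  have := Finset.card_le_card_of_surjOn _ (t := Finset.univ) (s := Finset.Icc A B)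
    (by simpa using h)
  rw [Finset.card_univ, ZMod.card, Int.card_Icc] at this
  have := NeZero.pos k
  omega

lemma validPath_univ_of_Ico_subset {s A B : ℤ} {p : List Move} (hp : p ≠ [])
    (hcov : Ico A B ⊆ coveredSetInt s p) (hAB : A + k ≤ B) :
    ValidPath (univ : Set (ZMod k)) s (endAtInt s p) p := by
  refine ⟨hp, (intCast_endAtInt s p).symm, ?_⟩
  rw [coveredSet_intCast, ← intCast_image_Ico A]
  exact image_mono ((Ico_subset_Ico_right hAB).trans hcov)

lemma validPath_univ_reverseWalk_of_Ico_subset {s A B : ℤ} {p : List Move} (hp : p ≠ [])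
    (hcov : Ico A B ⊆ coveredSetInt s p) (hAB : A + k ≤ B) :
    ValidPath (univ : Set (ZMod k)) (endAtInt s p) s (reverseWalk p) := by
  have := validPath_univ_of_Ico_subset (s := endAtInt s p) (p := reverseWalk p)
    (by simpa [reverseWalk] using hp) (by rwa [coveredSetInt_reverseWalk]) hAB
  rwa [endAtInt_reverseWalk] at this

end Windows

theorem le_length_of_validPath_univ {k h : ℕ} [NeZero k] (hkh : 2 * h ≤ k) {p : List Move}
    (hp : ValidPath (univ : Set (ZMod k)) 0 h p) : k + h - 2 ≤ p.length := by
  set H := maxAt 0 p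
  set L := minAt 0 p
  set e := endAtInt 0 p
  have hL : L ≤ 0 := minAt_le_self 0 p
  have hH : 0 ≤ H := self_le_maxAt 0 p
  have he : e ∈ Icc L H := endAtInt_mem_Icc 0 p
  have hdvd : (k : ℤ) ∣ e - h := by
    rw [← ZMod.intCast_zmod_eq_zero_iff_dvd]
    push_cast [e, intCast_endAtInt]
    simp [hp.2.1]
  have hwin : (k : ℤ) ≤ H - L + min 1 (p.count .b) + min 1 (p.count .d) := by
    have hsurj : SurjOn ((↑) : ℤ → ZMod k) (Icc (L - min 1 (p.count .d))
        (H - 1 + min 1 (p.count .b))) univ := by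
      intro r _
      obtain ⟨z, hz, rfl⟩ : r ∈ ((↑) : ℤ → ZMod k) '' coveredSetInt 0 p := by
        rw [← coveredSet_intCast, Int.cast_zero]
        exact hp.2.2 trivial
      exact ⟨z, coveredSetInt_subset_Icc 0 p hz, rfl⟩
    have := le_of_surjOn_Icc hsurj
    omega
  have htravel := travel_le_count 0 p
  have hlen := length_eq_count p
  obtain ⟨t, ht⟩ := hdvd
  have hkt : e ≤ h - 2 * k ∨ e = h - k ∨ e = h ∨ h + k ≤ e := by
    rcases (by omega : t ≤ -2 ∨ t = -1 ∨ t = 0 ∨ 1 ≤ t) with ht' | rfl | rfl | ht'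
    · have : (k : ℤ) * t ≤ k * -2 := mul_le_mul_of_nonneg_left ht' (by positivity)
      omega
    · omega
    · omega
    · have : (k : ℤ) * 1 ≤ k * t := mul_le_mul_of_nonneg_left ht' (by positivity)
      omega
  simp only [mem_Icc] at he
  omega

def sweep (i j : ℕ) : List Move :=
  (.b :: List.replicate i .a) ++ (.d :: List.replicate j .c)

section Sweeps

variable (s : ℤ) (i j : ℕ)

lemma endAtInt_b_replicate_a : endAtInt s (.b :: List.replicate i .a) = s - i :=
  endAtInt_replicate_a s i

lemma coveredSetInt_b_replicate_a :
    coveredSetInt s (.b :: List.replicate i .a) = Ico (s - i) (s + 1) := by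
  rw [coveredSetInt, coveredSetInt_replicate_a, stepInt, coversInt]
  ext z
  simp only [mem_insert_iff, mem_Ico]
  omega

lemma endAtInt_sweep : endAtInt s (sweep i j) = s - i + j := by
  rw [sweep, endAtInt_append, endAtInt_b_replicate_a, endAtInt, stepInt, endAtInt_replicate_c]

lemma Ico_subset_coveredSetInt_sweep : Ico (s - i - 1) (s + 1) ⊆ coveredSetInt s (sweep i j) := by
  rw [sweep, coveredSetInt_append, coveredSetInt_b_replicate_a, endAtInt_b_replicate_a,
    coveredSetInt, coversInt]
  intro z hz
  simp only [mem_union, mem_insert_iff, mem_Ico] at hz ⊢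
  omega

end Sweeps

lemma exists_validPath_univ_length_eq_modulus {k v : ℕ} [NeZero k] (hv : v ≤ 1 ∨ v + 1 = k) :
    ∃ p, ValidPath (univ : Set (ZMod k)) 0 v p ∧ p.length = k := by
  have hk := NeZero.pos k
  obtain rfl | rfl | hv : v = 0 ∨ v = 1 ∨ v + 1 = k := by omega
  · refine ⟨List.replicate k .c, ?_, List.length_replicate⟩
    have := validPath_univ_of_Ico_subset (k := k) (s := 0) (by simp; omega)
      (coveredSetInt_replicate_c 0 k).symm.subset (by simp)
    simpa [endAtInt_replicate_c] using this
  · refine ⟨.b :: List.replicate (k - 1) .a, ?_, by simp; omega⟩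
    have := validPath_univ_of_Ico_subset (k := k) (by simp)
      (coveredSetInt_b_replicate_a 0 (k - 1)).symm.subset (by omega)
    rw [endAtInt_b_replicate_a, show (0 : ℤ) - (k - 1 : ℕ) = 1 - k by omega] at this
    simpa using this
  · refine ⟨reverseWalk (.b :: List.replicate (k - 1) .a), ?_, by simp [reverseWalk]; omega⟩
    have := validPath_univ_reverseWalk_of_Ico_subset (k := k) (by simp)
      (coveredSetInt_b_replicate_a v (k - 1)).symm.subset (by omega)
    rwa [endAtInt_b_replicate_a, show (v : ℤ) - (k - 1 : ℕ) = 0 by omega, Int.cast_zero,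
      Int.cast_natCast] at this

lemma exists_validPath_univ_sweep {k v : ℕ} [NeZero k] (hv : 2 ≤ v) (hvk : v ≤ k) :
    ∃ p, ValidPath (univ : Set (ZMod k)) 0 v p ∧ p.length = k + v - 2 := by
  refine ⟨sweep (k - 2) (v - 2), ?_, by simp [sweep]; omega⟩
  have := validPath_univ_of_Ico_subset (k := k) (s := 0) (by simp [sweep])
    (Ico_subset_coveredSetInt_sweep 0 (k - 2) (v - 2)) (by omega)
  rw [endAtInt_sweep, show (0 : ℤ) - (k - 2 : ℕ) + (v - 2 : ℕ) = v - k by omega] at this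
  simpa using this

lemma exists_validPath_univ_reverseWalk_sweep {k v : ℕ} [NeZero k] (hvk : v + 2 ≤ k) :
    ∃ p, ValidPath (univ : Set (ZMod k)) 0 v p ∧ p.length = 2 * k - v - 2 := by
  refine ⟨reverseWalk (sweep (k - 2) (k - v - 2)), ?_, by simp [reverseWalk, sweep]; omega⟩
  have := validPath_univ_reverseWalk_of_Ico_subset (k := k) (by simp [sweep])
    (Ico_subset_coveredSetInt_sweep v (k - 2) (k - v - 2)) (by omega)
  rwa [endAtInt_sweep, show (v : ℤ) - (k - 2 : ℕ) + (k - v - 2 : ℕ) = 0 by omega, Int.cast_zero,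
    Int.cast_natCast] at this

theorem exists_validPath_univ_length_le {k : ℕ} (hk : 4 ≤ k) (x : ZMod k) :
    ∃ p, ValidPath (univ : Set (ZMod k)) 0 x p ∧ p.length ≤ k + k / 2 - 2 := by
  have : NeZero k := ⟨by omega⟩
  obtain ⟨v, hvk, rfl⟩ : ∃ v < k, (v : ZMod k) = x := ⟨x.val, x.val_lt, x.natCast_zmod_val⟩
  rcases (by omega : v ≤ 1 ∨ v + 1 = k ∨ 2 ≤ v ∧ v ≤ k / 2 ∨ k / 2 < v ∧ v + 2 ≤ k)
    with hv | hv | hv | hv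
  · obtain ⟨p, hp, hlen⟩ := exists_validPath_univ_length_eq_modulus (k := k) (Or.inl hv)
    exact ⟨p, hp, by omega⟩
  · obtain ⟨p, hp, hlen⟩ := exists_validPath_univ_length_eq_modulus (Or.inr hv)
    exact ⟨p, hp, by omega⟩
  · obtain ⟨p, hp, hlen⟩ := exists_validPath_univ_sweep (k := k) hv.1 (by omega)
    exact ⟨p, hp, by omega⟩
  · obtain ⟨p, hp, hlen⟩ := exists_validPath_univ_reverseWalk_sweep (k := k) hv.2
    exact ⟨p, hp, by omega⟩

/-- for k ≥ 4, the maximum over all pairs (B, x) ≠ (∅, 0) of the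
minimum length of a valid path from 0 to x covering B equals k + ⌊k/2⌋ − 2. -/
theorem diameter_large_k (k : ℕ) (hk : 4 ≤ k) :
    IsGreatest
      {L : ℕ | ∃ (B : Set (ZMod k)) (x : ZMod k), ¬(B = ∅ ∧ x = 0) ∧
        L = sInf {m : ℕ | ∃ p : List Move, ValidPath B 0 x p ∧ p.length = m}}
      (k + k / 2 - 2) := by
  have : NeZero k := ⟨by omega⟩
  constructor
  · refine ⟨univ, ((k / 2 : ℕ) : ZMod k), fun h => univ_nonempty.ne_empty h.1, ?_⟩
    obtain ⟨p, hp, hlen⟩ := exists_validPath_univ_sweep (k := k) (v := k / 2) (by omega) (by omega)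
    refine le_antisymm (le_csInf ⟨p.length, p, hp, rfl⟩ ?_) (Nat.sInf_le ⟨p, hp, hlen⟩)
    rintro m ⟨q, hq, rfl⟩
    exact le_length_of_validPath_univ (by omega) hq
  · rintro L ⟨B, x, -, rfl⟩
    obtain ⟨p, ⟨hne, hend, hcov⟩, hlen⟩ := exists_validPath_univ_length_le hk x
    exact le_trans (Nat.sInf_le ⟨p, ⟨hne, hend, (subset_univ B).trans hcov⟩, rfl⟩) hlen
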